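/- Let f_1,...,f_T be functions on X satisfying f_t(x) ≤ f_t(x') + ⟨∇f_t(x), x-x'⟩ - α V_x(x') for all x,x' ∈ X with α > 0, and with ‖∇f_t(x)‖_* ≤ G for all x ∈ X, t ∈ [T]. With weights θ_t = 2t/(T(T+1)) and Mirror Descent steps x_{t+1} = argmin_{x∈X}{γ_t⟨∇f_t(x_t), x⟩ + V_{x_t}(x)} with step sizes γ_t = 2/(α(t+1)), the weighted regret satisfies ∑_{t=1}^T θ_t f_t(x_t) - inf_{x∈X} ∑_{t=1}^T θ_t f_t(x) ≤ 2G²/(α(T+1)). -/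

import Mathlib

/-!
The first-order optimality condition of the prox step, combined with the three-point identity
for the Bregman divergence `V`, gives for every step size `γ > 0` the one-step bound
`f(xₜ) - f(u) ≤ γG²/2 + (1/γ - α) V(xₜ, u) - V(xₜ₊₁, u)/γ`,
where the gradient term `⟪g, xₜ - xₜ₊₁⟫ ≤ G‖xₜ - xₜ₊₁‖` is absorbed by
`‖xₜ - xₜ₊₁‖²/2 ≤ V(xₜ, xₜ₊₁)` (strong convexity of `ω`). For `γₜ = 2/(α(t+1))`, multiplying by
`t` turns the two Bregman coefficients into `cₜ₋₁` and `cₜ` with `cₜ = αt(t+1)/2`, so the weighted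
sum telescopes; since `c₀ = 0` and `V ≥ 0`, it is at most `TG²/α`.
-/

open scoped RealInnerProductSpace
open Set InnerProductSpace

lemma add_add_half_le_of_hasDerivAt {φ φ' : ℝ → ℝ} {K : ℝ}
    (hφ : ∀ t ∈ Icc (0 : ℝ) 1, HasDerivAt φ (φ' t) t)
    (hK : ∀ t ∈ Ioo (0 : ℝ) 1, t * K ≤ φ' t - φ' 0) :
    φ 0 + φ' 0 + K / 2 ≤ φ 1 := by
  set ψ : ℝ → ℝ := fun t => φ t - t * φ' 0 - t ^ 2 * (K / 2)
  have hψ : ∀ t ∈ Icc (0 : ℝ) 1, HasDerivAt ψ (φ' t - φ' 0 - t * K) t := fun t ht => by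
    have h := ((hφ t ht).fun_sub ((hasDerivAt_id' t).mul_const (φ' 0))).fun_sub
      ((hasDerivAt_pow 2 t).mul_const (K / 2))
    refine h.congr_deriv ?_
    norm_num
    ring
  have hmono : MonotoneOn ψ (Icc 0 1) := by
    refine monotoneOn_of_hasDerivWithinAt_nonneg (f' := fun t => φ' t - φ' 0 - t * K)
      (convex_Icc 0 1) (fun t ht => (hψ t ht).continuousAt.continuousWithinAt)
      (fun t ht => ?_) (fun t ht => ?_)
    · rw [interior_Icc] at ht
      exact (hψ t (Ioo_subset_Icc_self ht)).hasDerivWithinAt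
    · rw [interior_Icc] at ht
      linarith [hK t ht]
  have := hmono (left_mem_Icc.2 zero_le_one) (right_mem_Icc.2 zero_le_one) zero_le_one
  simp only [ψ] at this
  linarith

lemma Finset.sum_range_le_mul_of_le_sub_succ_add {a b : ℕ → ℝ} {C : ℝ} {T : ℕ}
    (h : ∀ i < T, a i ≤ b i - b (i + 1) + C) (h0 : b 0 = 0) (hT : 0 ≤ b T) :
    ∑ i ∈ range T, a i ≤ T * C := by
  calc ∑ i ∈ range T, a i ≤ ∑ i ∈ range T, (b i - b (i + 1) + C) :=
        sum_le_sum fun i hi => h i (mem_range.1 hi)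
    _ = b 0 - b T + T * C := by
        rw [sum_add_distrib, sum_range_sub', sum_const, card_range, nsmul_eq_mul]
    _ ≤ T * C := by linarith

lemma Finset.sum_linear_weight_sub_le {T : ℕ} (hT : 0 < T) {a b : ℕ → ℝ} {C : ℝ}
    (h : ∑ i ∈ range T, ((i : ℝ) + 1) * (a i - b i) ≤ T * C) :
    ∑ i ∈ range T, 2 * ((i : ℝ) + 1) / (T * (T + 1)) * a i -
      ∑ i ∈ range T, 2 * ((i : ℝ) + 1) / (T * (T + 1)) * b i ≤ 2 * C / (T + 1) := by
  have hT' : (0 : ℝ) < T := Nat.cast_pos.2 hT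
  calc ∑ i ∈ range T, 2 * ((i : ℝ) + 1) / (T * (T + 1)) * a i -
        ∑ i ∈ range T, 2 * ((i : ℝ) + 1) / (T * (T + 1)) * b i
      = 2 / (T * (T + 1)) * ∑ i ∈ range T, ((i : ℝ) + 1) * (a i - b i) := by
        rw [← sum_sub_distrib, mul_sum]
        exact sum_congr rfl fun i _ => by ring
    _ ≤ 2 / (T * (T + 1)) * (T * C) := by gcongr
    _ = 2 * C / (T + 1) := by field_simp

section Bregman

variable {E : Type*} [NormedAddCommGroup E] [InnerProductSpace ℝ E]

noncomputable def bregman (ω : E → ℝ) (gradω : E → E) (z z' : E) : ℝ :=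
  ω z' - ω z - ⟪gradω z, z' - z⟫

variable {ω : E → ℝ} {gradω : E → E}

lemma bregman_three_point (x y u : E) :
    ⟪gradω y - gradω x, u - y⟫ =
      bregman ω gradω x u - bregman ω gradω y u - bregman ω gradω x y := by
  simp only [bregman, inner_sub_left, inner_sub_right]
  ring

lemma sub_le_of_bregman_prox {f : E → ℝ} {α γ G a : ℝ} {g x x' u : E} (hγ : 0 < γ)
    (hf : f x ≤ f u + ⟪g, x - u⟫ - α * bregman ω gradω x u)
    (hprox : γ * ⟪g, x' - u⟫ ≤
      bregman ω gradω x u - bregman ω gradω x' u - bregman ω gradω x x')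
    (hg : ⟪g, x - x'⟫ ≤ G * a) (ha : a ^ 2 / 2 ≤ bregman ω gradω x x') :
    f x - f u ≤ γ * G ^ 2 / 2 + (1 / γ - α) * bregman ω gradω x u -
      bregman ω gradω x' u / γ := by
  have hsplit : ⟪g, x - u⟫ = ⟪g, x - x'⟫ + ⟪g, x' - u⟫ := by
    rw [← inner_add_right, sub_add_sub_cancel]
  have hamgm : γ * (G * a) ≤ γ ^ 2 * G ^ 2 / 2 + a ^ 2 / 2 := by
    nlinarith [sq_nonneg (γ * G - a)]
  rw [← mul_le_mul_iff_of_pos_left hγ]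
  field_simp
  nlinarith

lemma succ_mul_sub_le_of_bregman_prox {f : E → ℝ} {α G a : ℝ} {g x x' u : E} (i : ℕ)
    (hα : 0 < α) (hf : f x ≤ f u + ⟪g, x - u⟫ - α * bregman ω gradω x u)
    (hprox : 2 / (α * (i + 2)) * ⟪g, x' - u⟫ ≤
      bregman ω gradω x u - bregman ω gradω x' u - bregman ω gradω x x')
    (hg : ⟪g, x - x'⟫ ≤ G * a) (ha : a ^ 2 / 2 ≤ bregman ω gradω x x') :
    (i + 1) * (f x - f u) ≤ α * i * (i + 1) / 2 * bregman ω gradω x u -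
      α * (i + 1) * (i + 2) / 2 * bregman ω gradω x' u + G ^ 2 / α := by
  have h := sub_le_of_bregman_prox (by positivity) hf hprox hg ha
  calc (i + 1) * (f x - f u)
      ≤ (i + 1) * (2 / (α * (i + 2)) * G ^ 2 / 2 + (1 / (2 / (α * (i + 2))) - α) *
          bregman ω gradω x u - bregman ω gradω x' u / (2 / (α * (i + 2)))) := by gcongr
    _ = α * i * (i + 1) / 2 * bregman ω gradω x u -
          α * (i + 1) * (i + 2) / 2 * bregman ω gradω x' u + (i + 1) / (i + 2) * (G ^ 2 / α) := by
        field_simp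
        ring
    _ ≤ _ := by
        gcongr
        exact mul_le_of_le_one_left (by positivity) ((div_le_one (by positivity)).2 (by linarith))

variable [CompleteSpace E]

lemma HasGradientAt.hasDerivAt_comp_add_smul {F : E → ℝ} {p z v : E} {t : ℝ}
    (hF : HasGradientAt F p (z + t • v)) :
    HasDerivAt (fun s : ℝ => F (z + s • v)) ⟪p, v⟫ t := by
  have hline : HasDerivAt (fun s : ℝ => z + s • v) v t := by
    simpa using ((hasDerivAt_id t).smul_const v).const_add z
  simpa [Function.comp_def] using hF.hasFDerivAt.comp_hasDerivAt t hline

lemma IsMinOn.inner_sub_nonneg_of_hasGradientAt {X : Set E} (hX : Convex ℝ X) {F : E → ℝ}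
    {p a u : E} (ha : a ∈ X) (hu : u ∈ X) (hmin : IsMinOn F X a) (hF : HasGradientAt F p a) :
    0 ≤ ⟪p, u - a⟫ := by
  simpa using hmin.localize.hasFDerivWithinAt_nonneg hF.hasFDerivAt.hasFDerivWithinAt
    (sub_mem_posTangentConeAt_of_segment_subset (hX.segment_subset ha hu))

lemma sq_div_two_le_bregman {X : Set E} (hX : Convex ℝ X) {nrm : E → ℝ}
    (hnrm : ∀ (c : ℝ) (a : E), nrm (c • a) = |c| * nrm a)
    (hdiff : ∀ z ∈ X, HasGradientAt ω (gradω z) z)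
    (hstrong : ∀ z ∈ X, ∀ z' ∈ X, ⟪gradω z - gradω z', z - z'⟫ ≥ nrm (z - z') ^ 2)
    {z z' : E} (hz : z ∈ X) (hz' : z' ∈ X) :
    nrm (z - z') ^ 2 / 2 ≤ bregman ω gradω z z' := by
  set v := z' - z
  have hseg : ∀ t ∈ Icc (0 : ℝ) 1, z + t • v ∈ X := fun t ht => hX.add_smul_sub_mem hz hz' ht
  have key := add_add_half_le_of_hasDerivAt (φ := fun t => ω (z + t • v))
    (φ' := fun t => ⟪gradω (z + t • v), v⟫) (K := nrm (z - z') ^ 2)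
    (fun t ht => (hdiff _ (hseg t ht)).hasDerivAt_comp_add_smul) (fun t ht => ?_)
  · simp only [zero_smul, add_zero, one_smul, v, add_sub_cancel] at key
    rw [bregman]
    linarith
  have hsub : z - (z + t • v) = t • (z - z') := by simp only [v, smul_sub]; abel
  have hinner : ⟪gradω z - gradω (z + t • v), t • (z - z')⟫ =
      t * (⟪gradω (z + t • v), v⟫ - ⟪gradω z, v⟫) := by
    simp only [v, inner_smul_right, inner_sub_left, inner_sub_right]; ring
  have hstr := hstrong z hz _ (hseg t (Ioo_subset_Icc_self ht))
  rw [hsub, hinner, hnrm, abs_of_pos ht.1] at hstr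
  simp only [zero_smul, add_zero]
  nlinarith [ht.1]

lemma hasGradientAt_inner_add_bregman {γ : ℝ} {g x y : E} (h : HasGradientAt ω (gradω y) y) :
    HasGradientAt (fun z => γ * ⟪g, z⟫ + bregman ω gradω x z) (γ • g + gradω y - gradω x) y := by
  rw [hasGradientAt_iff_hasFDerivAt] at h ⊢
  have hfun : (fun z => γ * ⟪g, z⟫ + bregman ω gradω x z) =
      fun z => ω z + toDual ℝ E (γ • g - gradω x) z + (⟪gradω x, x⟫ - ω x) := by
    funext z
    simp only [bregman, toDual_apply_apply, inner_sub_left, inner_sub_right,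
      real_inner_smul_left]
    ring
  have hderiv : toDual ℝ E (γ • g + gradω y - gradω x) =
      toDual ℝ E (gradω y) + toDual ℝ E (γ • g - gradω x) := by
    rw [← map_add]
    congr 1
    abel
  rw [hfun, hderiv]
  exact (h.fun_add (toDual ℝ E (γ • g - gradω x)).hasFDerivAt).add_const _

lemma bregman_prox_inner_le {X : Set E} (hX : Convex ℝ X) {γ : ℝ} {g x x' u : E}
    (hdiff : HasGradientAt ω (gradω x') x') (hx' : x' ∈ X) (hu : u ∈ X)
    (hmin : IsMinOn (fun z => γ * ⟪g, z⟫ + bregman ω gradω x z) X x') :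
    γ * ⟪g, x' - u⟫ ≤ bregman ω gradω x u - bregman ω gradω x' u - bregman ω gradω x x' := by
  have hopt := hmin.inner_sub_nonneg_of_hasGradientAt hX hx' hu
    (hasGradientAt_inner_add_bregman hdiff)
  rw [add_sub_assoc, inner_add_left, real_inner_smul_left, bregman_three_point] at hopt
  rw [← neg_sub u x', inner_neg_right]
  linarith

end Bregman

theorem mirror_descent_strongly_convex_weighted_regret_general {n T : ℕ} (hT : 0 < T)
    (X : Set (EuclideanSpace ℝ (Fin n))) (hXconv : Convex ℝ X)
    (nrm dnrm : EuclideanSpace ℝ (Fin n) → ℝ)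
    (hnrm_homog : ∀ (c : ℝ) (a : EuclideanSpace ℝ (Fin n)), nrm (c • a) = |c| * nrm a)
    (hnrm_tri : ∀ a b : EuclideanSpace ℝ (Fin n), nrm (a + b) ≤ nrm a + nrm b)
    (hdual : ∀ ξ z : EuclideanSpace ℝ (Fin n), ⟪ξ, z⟫ ≤ dnrm ξ * nrm z)
    (ω : EuclideanSpace ℝ (Fin n) → ℝ)
    (gradω : EuclideanSpace ℝ (Fin n) → EuclideanSpace ℝ (Fin n))
    (hdiff : ∀ z ∈ X, HasGradientAt ω (gradω z) z)
    (hstrong : ∀ z' ∈ X, ∀ z'' ∈ X,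
      ⟪gradω z' - gradω z'', z' - z''⟫ ≥ (nrm (z' - z'')) ^ 2)
    (V : EuclideanSpace ℝ (Fin n) → EuclideanSpace ℝ (Fin n) → ℝ)
    (hV : ∀ z z', V z z' = ω z' - ω z - ⟪gradω z, z' - z⟫)
    (α : ℝ) (hα : 0 < α)
    (f : ℕ → EuclideanSpace ℝ (Fin n) → ℝ)
    (gradf : ℕ → EuclideanSpace ℝ (Fin n) → EuclideanSpace ℝ (Fin n))
    (hfsc : ∀ i < T, ∀ x ∈ X, ∀ x' ∈ X,
      f i x ≤ f i x' + ⟪gradf i x, x - x'⟫ - α * V x x')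
    (G : ℝ) (hGbound : ∀ i < T, ∀ x ∈ X, dnrm (gradf i x) ≤ G)
    -- weights θ_t = 2t/(T(T+1)) and step sizes γ_t = 2/(α(t+1)), with t = i+1
    (θ : ℕ → ℝ) (hθ : ∀ i, θ i = 2 * ((i : ℝ) + 1) / ((T : ℝ) * ((T : ℝ) + 1)))
    (γ : ℕ → ℝ) (hγ : ∀ i, γ i = 2 / (α * ((i : ℝ) + 2)))
    (xs : ℕ → EuclideanSpace ℝ (Fin n))
    (hx0 : xs 0 ∈ X)
    (hupdate : ∀ i < T, xs (i + 1) ∈ X ∧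
      IsMinOn (fun z => γ i * ⟪gradf i (xs i), z⟫ + V (xs i) z) X (xs (i + 1))) :
    ∀ x ∈ X,
      ∑ i ∈ Finset.range T, θ i * f i (xs i) - ∑ i ∈ Finset.range T, θ i * f i x ≤
        2 * G ^ 2 / (α * ((T : ℝ) + 1)) := by
  intro u hu
  obtain rfl : V = bregman ω gradω := funext₂ hV
  obtain rfl : θ = fun i : ℕ => 2 * ((i : ℝ) + 1) / ((T : ℝ) * ((T : ℝ) + 1)) := funext hθ
  have hmem : ∀ i ≤ T, xs i ∈ X
    | 0, _ => hx0
    | i + 1, hi => (hupdate i hi).1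
  have hnrm_nonneg : ∀ a, 0 ≤ nrm a :=
    apply_nonneg (Seminorm.of (𝕜 := ℝ) nrm hnrm_tri fun c a => by rw [hnrm_homog, Real.norm_eq_abs])
  set c : ℕ → ℝ := fun i => α * i * (i + 1) / 2 * bregman ω gradω (xs i) u
  have hstep : ∀ i < T, ((i : ℝ) + 1) * (f i (xs i) - f i u) ≤ c i - c (i + 1) + G ^ 2 / α := by
    intro i hi
    have hxi := hmem i hi.le
    have hxi' := hmem (i + 1) hi
    have h := succ_mul_sub_le_of_bregman_prox i hα (hfsc i hi _ hxi u hu)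
      (hγ i ▸ bregman_prox_inner_le hXconv (hdiff _ hxi') hxi' hu (hupdate i hi).2)
      ((hdual _ _).trans (mul_le_mul_of_nonneg_right (hGbound i hi _ hxi) (hnrm_nonneg _)))
      (sq_div_two_le_bregman hXconv hnrm_homog hdiff hstrong hxi hxi')
    simp only [c]
    push_cast
    linarith
  have hcT : 0 ≤ c T := mul_nonneg (by positivity)
    ((by positivity : (0 : ℝ) ≤ nrm (xs T - u) ^ 2 / 2).trans
      (sq_div_two_le_bregman hXconv hnrm_homog hdiff hstrong (hmem T le_rfl) hu))
  calc _ ≤ 2 * (G ^ 2 / α) / (T + 1) := Finset.sum_linear_weight_sub_le hT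
        (Finset.sum_range_le_mul_of_le_sub_succ_add hstep (by simp [c]) hcT)
    _ = 2 * G ^ 2 / (α * ((T : ℝ) + 1)) := by field_simp

/-- Mirror Descent with increasing weights `θ_t = 2t/(T(T+1))` and step
sizes `γ_t = 2/(α(t+1))` for `α`-strongly convex (relative to `ω`) losses with
`‖∇f_t‖_* ≤ G` achieves weighted regret at most `2G²/(α(T+1))`.
Index `i ∈ Finset.range T` represents time step `t = i+1`. -/
theorem mirror_descent_strongly_convex_weighted_regret {n T : ℕ} (hT : 0 < T)
    (X : Set (EuclideanSpace ℝ (Fin n))) (hXconv : Convex ℝ X) (hXcomp : IsCompact X)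
    (nrm dnrm : EuclideanSpace ℝ (Fin n) → ℝ)
    (hnrm_homog : ∀ (c : ℝ) (a : EuclideanSpace ℝ (Fin n)), nrm (c • a) = |c| * nrm a)
    (hnrm_tri : ∀ a b : EuclideanSpace ℝ (Fin n), nrm (a + b) ≤ nrm a + nrm b)
    (hdual : ∀ ξ z : EuclideanSpace ℝ (Fin n), ⟪ξ, z⟫ ≤ dnrm ξ * nrm z)
    (ω : EuclideanSpace ℝ (Fin n) → ℝ)
    (gradω : EuclideanSpace ℝ (Fin n) → EuclideanSpace ℝ (Fin n))
    (hdiff : ∀ z ∈ X, HasGradientAt ω (gradω z) z)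
    (hstrong : ∀ z' ∈ X, ∀ z'' ∈ X,
      ⟪gradω z' - gradω z'', z' - z''⟫ ≥ (nrm (z' - z'')) ^ 2)
    (V : EuclideanSpace ℝ (Fin n) → EuclideanSpace ℝ (Fin n) → ℝ)
    (hV : ∀ z z', V z z' = ω z' - ω z - ⟪gradω z, z' - z⟫)
    (α : ℝ) (hα : 0 < α)
    (f : ℕ → EuclideanSpace ℝ (Fin n) → ℝ)
    (gradf : ℕ → EuclideanSpace ℝ (Fin n) → EuclideanSpace ℝ (Fin n))
    (hfdiff : ∀ i < T, ∀ x ∈ X, HasGradientAt (f i) (gradf i x) x)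
    (hfsc : ∀ i < T, ∀ x ∈ X, ∀ x' ∈ X,
      f i x ≤ f i x' + ⟪gradf i x, x - x'⟫ - α * V x x')
    (G : ℝ) (hG : 0 < G) (hGbound : ∀ i < T, ∀ x ∈ X, dnrm (gradf i x) ≤ G)
    -- weights θ_t = 2t/(T(T+1)) and step sizes γ_t = 2/(α(t+1)), with t = i+1
    (θ : ℕ → ℝ) (hθ : ∀ i, θ i = 2 * ((i : ℝ) + 1) / ((T : ℝ) * ((T : ℝ) + 1)))
    (γ : ℕ → ℝ) (hγ : ∀ i, γ i = 2 / (α * ((i : ℝ) + 2)))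
    (xs : ℕ → EuclideanSpace ℝ (Fin n))
    (hx0 : xs 0 ∈ X) (hx0center : IsMinOn ω X (xs 0))
    (hupdate : ∀ i < T, xs (i + 1) ∈ X ∧
      IsMinOn (fun z => γ i * ⟪gradf i (xs i), z⟫ + V (xs i) z) X (xs (i + 1))) :
    ∀ x ∈ X,
      ∑ i ∈ Finset.range T, θ i * f i (xs i) - ∑ i ∈ Finset.range T, θ i * f i x ≤
        2 * G ^ 2 / (α * ((T : ℝ) + 1)) :=
  mirror_descent_strongly_convex_weighted_regret_general hT X hXconv nrm dnrm hnrm_homog hnrm_tri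
    hdual ω gradω hdiff hstrong V hV α hα f gradf hfsc G hGbound θ hθ γ hγ xs hx0 hupdate
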